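/- Let c = (c1,c2) ∈ O² be primitive. (i) Suppose a/r and a'/r' both lie on L(c) (r, r' monic, |a| < |r|, |a'| < |r'|, with the gcd and divisibility conditions), a·r' ≠ a'·r, and max(|c1|,|c2|)² ≤ |r|·|r'|. Then |a/r − a'/r'| ≥ max(|c1|,|c2|)/(|r|·|r'|), where the difference is the maximum over the two coordinates of the absolute value computed in F_q(t) ⊂ K_∞. (ii) Suppose a/r lies on L(c) and max(|c1|,|c2|)² ≤ |r|. Then there exist a monic r1 with |r| < |r1| and a1 ∈ O² such that a1/r1 lies on L(c), |a/r − a1/r1| = max(|c1|,|c2|)/(|r|·|r1|), and (c1·(a1)₁ + c2·(a1)₂)/r1 = (c1·a1 + c2·a2)/r, i.e., both points lie on the same affine line {x : c1·x1 + c2·x2 = k} for some k ∈ O. -/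

import Mathlib

set_option autoImplicit false
set_option maxHeartbeats 1000000

noncomputable section

open Polynomial Matrix
open scoped Classical

variable {Fq : Type} [Field Fq] [Fintype Fq]

/-- The absolute value on `O = Fq[t]`: `|x| = q ^ deg x` for `x ≠ 0`, and `|0| = 0`. -/
def Oabs (x : Fq[X]) : ℝ := if x = 0 then 0 else (Fintype.card Fq : ℝ) ^ x.natDegree

/-- The maximum norm on pairs of polynomials. -/
def Oabs2 (a : Fq[X] × Fq[X]) : ℝ := max (Oabs a.1) (Oabs a.2)

/-- A pair `c = (c₁, c₂)` is primitive if `gcd(c₁,c₂) = 1` and either `c₁` is monic,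
or `c₁ = 0` and `c₂` is monic. -/
def Primitive (c : Fq[X] × Fq[X]) : Prop :=
  IsCoprime c.1 c.2 ∧ (c.1.Monic ∨ (c.1 = 0 ∧ c.2.Monic))

/-- `gcd(a, b, r) = 1`: every common divisor of `a`, `b` and `r` is a unit. -/
def CoprimeTriple (a b r : Fq[X]) : Prop :=
  ∀ p : Fq[X], p ∣ a → p ∣ b → p ∣ r → IsUnit p

/-- `a/r` lies on the generalised line `L(d·c)`: there is `k` with
`d(c₁a₁ + c₂a₂) = k·r` and `gcd(d,k) = 1`. -/
def OnLine (d : Fq[X]) (c : Fq[X] × Fq[X]) (r : Fq[X]) (a : Fq[X] × Fq[X]) : Prop :=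
  ∃ k : Fq[X], d * (c.1 * a.1 + c.2 * a.2) = k * r ∧ IsCoprime d k

/-- The embedding of `O = Fq[t]` into its fraction field `Fq(t)`. -/
def toR : Fq[X] →+* RatFunc Fq := algebraMap _ _

/-- The absolute value at infinity on `Fq(t)`: `|f| = q^{deg num f - deg denom f}`. -/
def Rabs (f : RatFunc Fq) : ℝ :=
  if f = 0 then 0 else (Fintype.card Fq : ℝ) ^ f.intDegree

lemma one_lt_q : (1:ℝ) < (Fintype.card Fq : ℝ) := by exact_mod_cast Fintype.one_lt_card

lemma q_pos : (0:ℝ) < (Fintype.card Fq : ℝ) := lt_trans one_pos (one_lt_q (Fq := Fq))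

lemma Oabs_zero : Oabs (0 : Fq[X]) = 0 := if_pos rfl

lemma Oabs_nonneg (x : Fq[X]) : 0 ≤ Oabs x := by
  unfold Oabs; split
  · exact le_refl 0
  · positivity

lemma one_le_Oabs {x : Fq[X]} (hx : x ≠ 0) : 1 ≤ Oabs x := by
  unfold Oabs; rw [if_neg hx]
  exact one_le_pow₀ (one_lt_q (Fq := Fq)).le

lemma Oabs_pos {x : Fq[X]} (hx : x ≠ 0) : 0 < Oabs x :=
  lt_of_lt_of_le one_pos (one_le_Oabs hx)

lemma Oabs_mul (x y : Fq[X]) : Oabs (x*y) = Oabs x * Oabs y := by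
  rcases eq_or_ne x 0 with rfl | hx
  · simp [Oabs_zero, Oabs]
  rcases eq_or_ne y 0 with rfl | hy
  · simp [Oabs_zero, Oabs]
  unfold Oabs
  rw [if_neg (mul_ne_zero hx hy), if_neg hx, if_neg hy, natDegree_mul hx hy, pow_add]

lemma Oabs_neg (x : Fq[X]) : Oabs (-x) = Oabs x := by unfold Oabs; simp

lemma Oabs_le_of_natDegree_le {x : Fq[X]} {n : ℕ} (h : x.natDegree ≤ n) :
    Oabs x ≤ (Fintype.card Fq : ℝ) ^ n := by
  unfold Oabs; split
  · positivity
  · exact pow_le_pow_right₀ (one_lt_q (Fq := Fq)).le h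

lemma Oabs_add_le (x y : Fq[X]) : Oabs (x+y) ≤ max (Oabs x) (Oabs y) := by
  rcases eq_or_ne x 0 with rfl | hx
  · simp
  rcases eq_or_ne y 0 with rfl | hy
  · simp
  rcases le_total x.natDegree y.natDegree with hle | hle
  · refine le_max_of_le_right ?_
    have := Oabs_le_of_natDegree_le (x := x+y) ((natDegree_add_le x y).trans (max_le hle le_rfl))
    rwa [show Oabs y = (Fintype.card Fq : ℝ) ^ y.natDegree from if_neg hy]
  · refine le_max_of_le_left ?_
    have := Oabs_le_of_natDegree_le (x := x+y) ((natDegree_add_le x y).trans (max_le le_rfl hle))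
    rwa [show Oabs x = (Fintype.card Fq : ℝ) ^ x.natDegree from if_neg hx]

lemma Oabs_dvd_le {x y : Fq[X]} (h : x ∣ y) (hy : y ≠ 0) : Oabs x ≤ Oabs y := by
  obtain ⟨z, rfl⟩ := h
  have hz : z ≠ 0 := fun h => hy (by simp [h])
  rw [Oabs_mul]
  nth_rewrite 1 [← mul_one (Oabs x)]
  exact mul_le_mul_of_nonneg_left (one_le_Oabs hz) (Oabs_nonneg x)

lemma Rabs_toR_div (p s : Fq[X]) (hs : s ≠ 0) :
    Rabs (toR p / toR s) = Oabs p / Oabs s := by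
  have hsR : toR (Fq := Fq) s ≠ 0 := by
    simpa [toR] using (RatFunc.algebraMap_ne_zero hs)
  rcases eq_or_ne p 0 with rfl | hp
  · simp [Rabs, Oabs_zero, toR]
  have hpR : toR (Fq := Fq) p ≠ 0 := by
    simpa [toR] using (RatFunc.algebraMap_ne_zero hp)
  have hf : toR (Fq := Fq) p / toR s ≠ 0 := div_ne_zero hpR hsR
  have hmul : (toR (Fq := Fq) p / toR s) * toR s = toR p := div_mul_cancel₀ _ hsR
  have hdeg : (toR (Fq := Fq) p / toR s).intDegree = (p.natDegree : ℤ) - s.natDegree := by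
    have := RatFunc.intDegree_mul hf hsR
    rw [hmul] at this
    rw [show (toR (Fq := Fq) p).intDegree = (p.natDegree : ℤ) from RatFunc.intDegree_polynomial,
      show (toR (Fq := Fq) s).intDegree = (s.natDegree : ℤ) from RatFunc.intDegree_polynomial] at this
    omega
  rw [Rabs, if_neg hf, hdeg, zpow_sub₀ (ne_of_gt (q_pos (Fq := Fq)))]
  rw [Oabs, if_neg hp, Oabs, if_neg hs]
  norm_num [zpow_natCast]

lemma dist_formula (p p' s s' : Fq[X]) (hs : s ≠ 0) (hs' : s' ≠ 0) :
    Rabs (toR p / toR s - toR p' / toR s') = Oabs (p * s' - p' * s) / (Oabs s * Oabs s') := by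
  have hsR : toR (Fq := Fq) s ≠ 0 := by simpa [toR] using (RatFunc.algebraMap_ne_zero hs)
  have hs'R : toR (Fq := Fq) s' ≠ 0 := by simpa [toR] using (RatFunc.algebraMap_ne_zero hs')
  have key : toR (Fq := Fq) p / toR s - toR p' / toR s'
      = toR (p * s' - p' * s) / toR (s * s') := by
    rw [map_sub, _root_.map_mul, _root_.map_mul, _root_.map_mul]
    field_simp
  rw [key, Rabs_toR_div _ _ (mul_ne_zero hs hs'), Oabs_mul]

lemma bezout3 {a b r : Fq[X]} (h : CoprimeTriple a b r) :
    ∃ u v w : Fq[X], u*a + v*b + w*r = 1 := by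
  set g2 := EuclideanDomain.gcd b r with hg2
  set g := EuclideanDomain.gcd a g2 with hg
  have hd2 : g ∣ g2 := EuclideanDomain.gcd_dvd_right _ _
  have hgu : IsUnit g := h g (EuclideanDomain.gcd_dvd_left _ _)
    (hd2.trans (EuclideanDomain.gcd_dvd_left b r))
    (hd2.trans (EuclideanDomain.gcd_dvd_right b r))
  obtain ⟨gi, hgi⟩ := hgu.exists_left_inv
  have h1 : g = a * EuclideanDomain.gcdA a g2 + g2 * EuclideanDomain.gcdB a g2 :=
    EuclideanDomain.gcd_eq_gcd_ab a g2
  have h2 : g2 = b * EuclideanDomain.gcdA b r + r * EuclideanDomain.gcdB b r :=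
    EuclideanDomain.gcd_eq_gcd_ab b r
  refine ⟨gi * EuclideanDomain.gcdA a g2,
    gi * (EuclideanDomain.gcdB a g2 * EuclideanDomain.gcdA b r),
    gi * (EuclideanDomain.gcdB a g2 * EuclideanDomain.gcdB b r), ?_⟩
  calc gi * EuclideanDomain.gcdA a g2 * a + gi * (EuclideanDomain.gcdB a g2 * EuclideanDomain.gcdA b r) * b
      + gi * (EuclideanDomain.gcdB a g2 * EuclideanDomain.gcdB b r) * r
      = gi * (a * EuclideanDomain.gcdA a g2 + (b * EuclideanDomain.gcdA b r + r * EuclideanDomain.gcdB b r) * EuclideanDomain.gcdB a g2) := by ring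
    _ = gi * g := by rw [← h2, ← h1]
    _ = 1 := hgi

lemma one_le_Oabs2_of_coprime {c : Fq[X] × Fq[X]} (hc : IsCoprime c.1 c.2) :
    1 ≤ Oabs2 c := by
  rcases eq_or_ne c.1 0 with h1 | h1
  · have h2 : c.2 ≠ 0 := by
      intro h2
      rw [h1, h2] at hc
      exact not_isCoprime_zero_zero hc
    exact le_max_of_le_right (one_le_Oabs h2)
  · exact le_max_of_le_left (one_le_Oabs h1)

/-- Core of part (i): the cross-difference has norm at least `|c|`. -/
lemma core_bound (c : Fq[X] × Fq[X]) (hc : IsCoprime c.1 c.2)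
    {r r' : Fq[X]} {a a' : Fq[X] × Fq[X]} (hr : r ≠ 0) (hr' : r' ≠ 0)
    (hd : r ∣ c.1 * a.1 + c.2 * a.2) (hd' : r' ∣ c.1 * a'.1 + c.2 * a'.2)
    (hne : ¬ (a.1 * r' = a'.1 * r ∧ a.2 * r' = a'.2 * r))
    (hbig : Oabs2 c ^ 2 ≤ Oabs r * Oabs r') :
    Oabs2 c ≤ max (Oabs (a.1 * r' - a'.1 * r)) (Oabs (a.2 * r' - a'.2 * r)) := by
  set Δ1 := a.1 * r' - a'.1 * r with hΔ1
  set Δ2 := a.2 * r' - a'.2 * r with hΔ2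
  have hΔne : Δ1 ≠ 0 ∨ Δ2 ≠ 0 := by
    by_contra h
    push_neg at h
    exact hne ⟨sub_eq_zero.mp h.1, sub_eq_zero.mp h.2⟩
  obtain ⟨k, hk⟩ := hd
  obtain ⟨k', hk'⟩ := hd'
  have hcd : c.1 * Δ1 + c.2 * Δ2 = r * r' * (k - k') := by
    rw [hΔ1, hΔ2]; ring_nf
    linear_combination r' * hk - r * hk'
  rcases eq_or_ne (c.1 * Δ1 + c.2 * Δ2) 0 with hz | hz
  · -- c·Δ = 0; then Δ = m (c2, -c1)
    obtain ⟨u, v, huv⟩ := hc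
    have e1 : Δ1 = c.2 * (v * Δ1 - u * Δ2) := by linear_combination (-Δ1) * huv + u * hz
    have e2 : Δ2 = -(c.1 * (v * Δ1 - u * Δ2)) := by linear_combination (-Δ2) * huv + v * hz
    set m := v * Δ1 - u * Δ2 with hm
    have hm0 : m ≠ 0 := by
      intro h
      rw [h, mul_zero] at e1 e2
      rcases hΔne with h' | h'
      · exact h' e1
      · exact h' (by rw [e2]; ring)
    refine max_le ?_ ?_
    · refine le_trans ?_ (le_max_right _ _)
      rw [e2, Oabs_neg, Oabs_mul]
      nth_rewrite 1 [← mul_one (Oabs c.1)]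
      exact mul_le_mul_of_nonneg_left (one_le_Oabs hm0) (Oabs_nonneg _)
    · refine le_trans ?_ (le_max_left _ _)
      rw [e1, Oabs_mul]
      nth_rewrite 1 [← mul_one (Oabs c.2)]
      exact mul_le_mul_of_nonneg_left (one_le_Oabs hm0) (Oabs_nonneg _)
  · -- c·Δ ≠ 0; then |c|² ≤ |rr'| ≤ |c·Δ| ≤ |c| |Δ|
    have h1 : Oabs r * Oabs r' ≤ Oabs (c.1 * Δ1 + c.2 * Δ2) := by
      rw [← Oabs_mul]
      exact Oabs_dvd_le ⟨k - k', hcd⟩ hz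
    have h2 : Oabs (c.1 * Δ1 + c.2 * Δ2) ≤ Oabs2 c * max (Oabs Δ1) (Oabs Δ2) := by
      refine (Oabs_add_le _ _).trans (max_le ?_ ?_)
      · rw [Oabs_mul]
        exact mul_le_mul (le_max_left _ _) (le_max_left _ _) (Oabs_nonneg _)
          (le_trans (Oabs_nonneg _) (le_max_left _ _))
      · rw [Oabs_mul]
        exact mul_le_mul (le_max_right _ _) (le_max_right _ _) (Oabs_nonneg _)
          (le_trans (Oabs_nonneg _) (le_max_left _ _))
    have hcpos : 0 < Oabs2 c := lt_of_lt_of_le one_pos (one_le_Oabs2_of_coprime hc)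
    have : Oabs2 c * Oabs2 c ≤ Oabs2 c * max (Oabs Δ1) (Oabs Δ2) := by
      calc Oabs2 c * Oabs2 c = Oabs2 c ^ 2 := (sq (Oabs2 c)).symm
        _ ≤ Oabs r * Oabs r' := hbig
        _ ≤ _ := h1.trans h2
    exact le_of_mul_le_mul_left this hcpos

/-- Spacing of rational points on a line `L(c)` for a primitive pair `c`:
(i) two distinct points `a/r ≠ a'/r'` on `L(c)` with `|c|² ≤ |r||r'|` are at distance
at least `|c|/(|r||r'|)`; (ii) every point `a/r` on `L(c)` with `|c|² ≤ |r|` has a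
neighbour `a₁/r₁` on `L(c)`, on the same affine line `c·x = k`, with `|r| < |r₁|` and
`|a/r − a₁/r₁| = |c|/(|r||r₁|)`. -/
theorem stmt_14 (Fq : Type) [Field Fq] [Fintype Fq]
    (c : Fq[X] × Fq[X]) (hc : Primitive c) :
    (∀ r r' : Fq[X], ∀ a a' : Fq[X] × Fq[X],
      r.Monic → r'.Monic →
      Oabs2 a < Oabs r → CoprimeTriple a.1 a.2 r → r ∣ c.1 * a.1 + c.2 * a.2 →
      Oabs2 a' < Oabs r' → CoprimeTriple a'.1 a'.2 r' → r' ∣ c.1 * a'.1 + c.2 * a'.2 →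
      ¬ (a.1 * r' = a'.1 * r ∧ a.2 * r' = a'.2 * r) →
      Oabs2 c ^ 2 ≤ Oabs r * Oabs r' →
      Oabs2 c / (Oabs r * Oabs r') ≤
        max (Rabs (toR a.1 / toR r - toR a'.1 / toR r'))
            (Rabs (toR a.2 / toR r - toR a'.2 / toR r'))) ∧
    (∀ r : Fq[X], ∀ a : Fq[X] × Fq[X],
      r.Monic → Oabs2 a < Oabs r → CoprimeTriple a.1 a.2 r → r ∣ c.1 * a.1 + c.2 * a.2 →
      Oabs2 c ^ 2 ≤ Oabs r →
      ∃ r1 : Fq[X], ∃ a1 : Fq[X] × Fq[X],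
        r1.Monic ∧ Oabs r < Oabs r1 ∧
        Oabs2 a1 < Oabs r1 ∧ CoprimeTriple a1.1 a1.2 r1 ∧
        r1 ∣ c.1 * a1.1 + c.2 * a1.2 ∧
        max (Rabs (toR a.1 / toR r - toR a1.1 / toR r1))
            (Rabs (toR a.2 / toR r - toR a1.2 / toR r1))
          = Oabs2 c / (Oabs r * Oabs r1) ∧
        (c.1 * a1.1 + c.2 * a1.2) * r = (c.1 * a.1 + c.2 * a.2) * r1) := by
  obtain ⟨hcop, -⟩ := hc
  constructor
  · -- Part (i)
    intro r r' a a' hrm hr'm ha hcopa hd ha' hcopa' hd' hne hbig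
    have hr : r ≠ 0 := hrm.ne_zero
    have hr' : r' ≠ 0 := hr'm.ne_zero
    have hD : 0 < Oabs r * Oabs r' := mul_pos (Oabs_pos hr) (Oabs_pos hr')
    rw [dist_formula _ _ _ _ hr hr', dist_formula _ _ _ _ hr hr',
      max_div_div_right hD.le]
    gcongr
    exact core_bound c hcop hr hr' hd hd' hne hbig
  · -- Part (ii)
    intro r a hrm ha hcopa hd hbig
    have hr : r ≠ 0 := hrm.ne_zero
    obtain ⟨u, v, w, hbez⟩ := bezout3 hcopa
    obtain ⟨k, hk⟩ := hd
    set t0 := v * c.1 - u * c.2 with ht0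
    set r1 := r * X + t0 %ₘ r with hr1def
    have hmodlt : (t0 %ₘ r).degree < r.degree := degree_modByMonic_lt t0 hrm
    have hrXm : (r * X).Monic := hrm.mul monic_X
    have hdltX : r.degree < (r * X).degree := degree_lt_degree_mul_X hr
    have hr1m : r1.Monic := hrXm.add_of_left (hmodlt.trans hdltX)
    have hr10 : r1 ≠ 0 := hr1m.ne_zero
    have hr1deg : r1.natDegree = r.natDegree + 1 := by
      have : r1.degree = (r * X).degree := degree_add_eq_left_of_degree_lt (hmodlt.trans hdltX)
      have h2 : r1.natDegree = (r * X).natDegree := by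
        rw [← natDegree_eq_of_degree_eq this]
      rw [h2, natDegree_mul hr X_ne_zero, natDegree_X]
    have hOr1 : Oabs r < Oabs r1 := by
      rw [Oabs, if_neg hr, Oabs, if_neg hr10, hr1deg]
      exact pow_lt_pow_right₀ (one_lt_q (Fq := Fq)) (Nat.lt_succ_self _)
    have hrt0 : r ∣ r1 - t0 := by
      rw [hr1def, modByMonic_eq_sub_mul_div t0 r]
      exact ⟨X - t0 /ₘ r, by ring⟩
    obtain ⟨s, hs⟩ := hrt0
    -- key congruences
    have h1 : a.1 * t0 + c.2 = r * (v * k + w * c.2) := by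
      rw [ht0]; linear_combination v * hk - c.2 * hbez
    have h2 : a.2 * t0 - c.1 = r * (-(u * k) - w * c.1) := by
      rw [ht0]; linear_combination (-u) * hk + c.1 * hbez
    have hb1 : a.1 * r1 + c.2 = r * (a.1 * s + v * k + w * c.2) := by
      have : a.1 * r1 + c.2 = a.1 * (r1 - t0) + (a.1 * t0 + c.2) := by ring
      rw [this, hs, h1]; ring
    have hb2 : a.2 * r1 - c.1 = r * (a.2 * s + (-(u * k) - w * c.1)) := by
      have : a.2 * r1 - c.1 = a.2 * (r1 - t0) + (a.2 * t0 - c.1) := by ring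
      rw [this, hs, h2]; ring
    set b1 := a.1 * s + v * k + w * c.2 with hb1def
    set b2 := a.2 * s + (-(u * k) - w * c.1) with hb2def
    refine ⟨r1, (b1, b2), hr1m, hOr1, ?_, ?_, ?_, ?_, ?_⟩
    · -- Oabs2 (b1,b2) < Oabs r1
      have hcle : Oabs2 c ≤ Oabs r := by
        calc Oabs2 c = Oabs2 c * 1 := (mul_one _).symm
          _ ≤ Oabs2 c * Oabs2 c :=
              mul_le_mul_of_nonneg_left (one_le_Oabs2_of_coprime hcop)
                (le_trans zero_le_one (one_le_Oabs2_of_coprime hcop))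
          _ = Oabs2 c ^ 2 := (sq _).symm
          _ ≤ Oabs r := hbig
      have key : ∀ x ci b : Fq[X], Oabs x ≤ Oabs2 a → Oabs ci ≤ Oabs2 c →
          x * r1 + ci = r * b → Oabs b < Oabs r1 := by
        intro x ci b hx hci hb
        have h1 : Oabs (x * r1) < Oabs r * Oabs r1 := by
          rw [Oabs_mul]
          exact mul_lt_mul_of_pos_right (lt_of_le_of_lt hx ha) (Oabs_pos hr10)
        have h2 : Oabs ci < Oabs r * Oabs r1 := by
          calc Oabs ci ≤ Oabs r := hci.trans hcle
            _ = Oabs r * 1 := (mul_one _).symm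
            _ < Oabs r * Oabs r1 :=
                mul_lt_mul_of_pos_left (lt_of_le_of_lt (one_le_Oabs hr) hOr1) (Oabs_pos hr)
        have hlt : Oabs (r * b) < Oabs r * Oabs r1 := by
          rw [← hb]
          exact lt_of_le_of_lt (Oabs_add_le _ _) (max_lt h1 h2)
        rw [Oabs_mul] at hlt
        exact lt_of_mul_lt_mul_left hlt (Oabs_nonneg r)
      exact max_lt (key a.1 c.2 b1 (le_max_left _ _) (le_max_right _ _) hb1)
        (key a.2 (-c.1) b2 (le_max_right _ _) (by rw [Oabs_neg]; exact le_max_left _ _)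
          (by linear_combination hb2))
    · -- CoprimeTriple
      intro p hp1 hp2 hpr1
      have hc2 : p ∣ c.2 := by
        have : c.2 = r * b1 - a.1 * r1 := by linear_combination hb1
        rw [this]
        exact dvd_sub (Dvd.dvd.mul_left hp1 r) (Dvd.dvd.mul_left hpr1 a.1)
      have hc1 : p ∣ c.1 := by
        have : c.1 = a.2 * r1 - r * b2 := by linear_combination -hb2
        rw [this]
        exact dvd_sub (Dvd.dvd.mul_left hpr1 a.2) (Dvd.dvd.mul_left hp2 r)
      obtain ⟨x, y, hxy⟩ := hcop
      exact isUnit_of_dvd_one (hxy ▸ dvd_add (hc1.mul_left x) (hc2.mul_left y))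
    · -- r1 ∣ c·b
      have heq : (c.1 * b1 + c.2 * b2) * r = (c.1 * a.1 + c.2 * a.2) * r1 := by
        linear_combination (-c.1) * hb1 + (-c.2) * hb2
      have : (c.1 * b1 + c.2 * b2) * r = (r1 * k) * r := by
        rw [heq, hk]; ring
      exact ⟨k, mul_right_cancel₀ hr this⟩
    · -- distance
      have e1 : a.1 * r1 - b1 * r = -c.2 := by linear_combination hb1
      have e2 : a.2 * r1 - b2 * r = c.1 := by linear_combination hb2
      rw [dist_formula _ _ _ _ hr hr10, dist_formula _ _ _ _ hr hr10, e1, e2, Oabs_neg,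
        max_div_div_right (mul_pos (Oabs_pos hr) (Oabs_pos hr10)).le,
        max_comm (Oabs c.2) (Oabs c.1), Oabs2]
    · -- line identity
      linear_combination (-c.1) * hb1 + (-c.2) * hb2
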